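/- For every integer k ≥ 2, the minimum of the dominator chromatic number χ_d(D) over all orientations D of the path P_{4k+2} equals k+3. -/

import Mathlib

/-- A vertex `v` dominates the color class of color `a` under coloring `c`:
the class is nonempty and every vertex of that color is an out-neighbor of `v`. -/
def Dominates {V α : Type*} (A : V → V → Prop) (c : V → α) (v : V) (a : α) : Prop :=
  (∃ w, c w = a) ∧ ∀ w, c w = a → A v w

/-- A dominator coloring of the digraph with arc relation `A`: a proper coloring
such that every vertex with positive out-degree dominates some color class. -/
def IsDominatorColoring {V α : Type*} (A : V → V → Prop) (c : V → α) : Prop :=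
  (∀ u v, A u v → c u ≠ c v) ∧ ∀ v, (∃ w, A v w) → ∃ a, Dominates A c v a

/-- The dominator chromatic number: the least `k` admitting a dominator coloring
with colors in `Fin k`. -/
noncomputable def domChrom {V : Type*} (A : V → V → Prop) : ℕ :=
  sInf {k | ∃ c : V → Fin k, IsDominatorColoring A c}

/-- The arc relation of the orientation of the path `P_n` (vertices `0,…,n-1`)
determined by `o`: the edge between `i` and `i+1` is directed `i → i+1`
when `o i = true` and `i+1 → i` when `o i = false`. -/
def pathArc (n : ℕ) (o : ℕ → Bool) (u v : Fin n) : Prop :=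
  ((u : ℕ) + 1 = (v : ℕ) ∧ o u = true) ∨ ((v : ℕ) + 1 = (u : ℕ) ∧ o v = false)

/-- The minimum of the dominator chromatic number over all orientations of `P_n`. -/
noncomputable def minDomChromPath (n : ℕ) : ℕ :=
  sInf {m | ∃ o : ℕ → Bool, m = domChrom (pathArc n o)}

/-!
Lower bound: a vertex dominating a colour class of an oriented path has that class among its at
most two neighbours, and two distinct vertices dominating the same class share it as a common
neighbour, so a dominated class `C` together with its dominators `F` satisfies `|C| + |F| ≤ 3` and
`|F| ≤ 2`. Every colour class is independent, hence has at most `2k + 1` vertices, and at least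
`2k + 1` of the `4k + 2` vertices have an out-neighbour. Counting vertices plus dominators colour by
colour, `k + 2` colours cannot suffice.

Upper bound: orient the path so that even vertices are sources and odd ones sinks, give all sources
one colour, the vertices `4i + 3` a second one and each vertex `4i + 1` a colour of its own; every
source is adjacent to one of these `k + 1` singletons.
-/

open Finset SimpleGraph

theorem domChrom_le {V : Type*} {A : V → V → Prop} {m : ℕ} {c : V → Fin m}
    (hc : IsDominatorColoring A c) : domChrom A ≤ m :=
  Nat.sInf_le ⟨c, hc⟩

theorem le_domChrom {V : Type*} {A : V → V → Prop} {N : ℕ}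
    (hA : ∃ m, ∃ c : V → Fin m, IsDominatorColoring A c)
    (h : ∀ m (c : V → Fin m), IsDominatorColoring A c → N ≤ m) : N ≤ domChrom A :=
  le_csInf hA fun m ⟨c, hc⟩ => h m c hc

theorem exists_isDominatorColoring {V : Type*} [Fintype V] {A : V → V → Prop}
    (hA : ∀ v, ¬A v v) : ∃ m, ∃ c : V → Fin m, IsDominatorColoring A c := by
  refine ⟨_, Fintype.equivFin V, fun u v huv h => ?_, fun v ⟨w, hw⟩ => ?_⟩
  · obtain rfl := (Fintype.equivFin V).injective h
    exact hA u huv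
  · exact ⟨Fintype.equivFin V w, ⟨w, rfl⟩, fun y hy => (Fintype.equivFin V).injective hy ▸ hw⟩

section Path

variable {n : ℕ} {o : ℕ → Bool} {u v x y : Fin n} {s : Finset (Fin n)}

theorem pathArc.adj (h : pathArc n o u v) : (pathGraph n).Adj u v := by
  rw [pathGraph_adj]
  rcases h with ⟨h, -⟩ | ⟨h, -⟩
  exacts [Or.inl h, Or.inr h]

theorem pathArc_irrefl (v : Fin n) : ¬pathArc n o v v :=
  fun h => h.adj.ne rfl

theorem pathArc_or_pathArc_of_adj (h : (pathGraph n).Adj u v) :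
    pathArc n o u v ∨ pathArc n o v u := by
  rw [pathGraph_adj] at h
  unfold pathArc
  rcases h with h | h
  · cases o u <;> simp [h]
  · cases o v <;> simp [h]

theorem card_le_two_of_forall_adj (h : ∀ y ∈ s, (pathGraph n).Adj x y) :
    #s ≤ 2 := by
  calc #s = #(s.map Fin.valEmbedding) := (card_map _).symm
    _ ≤ #({(x : ℕ) + 1, (x : ℕ) - 1} : Finset ℕ) := by
        refine card_le_card fun z hz => ?_
        obtain ⟨y, hy, rfl⟩ := mem_map.mp hz
        have := pathGraph_adj.mp (h y hy)
        simp only [Fin.valEmbedding_apply, mem_insert, mem_singleton]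
        omega
    _ ≤ 2 := card_le_two

theorem card_le_one_of_forall_adj_adj (hxy : x ≠ y)
    (h : ∀ z ∈ s, (pathGraph n).Adj x z ∧ (pathGraph n).Adj y z) : #s ≤ 1 := by
  refine card_le_one.mpr fun z hz w hw => ?_
  have hz' := h z hz
  have hw' := h w hw
  simp only [pathGraph_adj] at hz' hw'
  rw [Ne, Fin.ext_iff] at hxy
  exact Fin.ext (by omega)

theorem card_le_of_isIndepSet_pathGraph
    (hs : (pathGraph n).IsIndepSet (s : Set (Fin n))) : #s ≤ (n + 1) / 2 := by
  calc #s ≤ #(range ((n + 1) / 2)) := by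
        refine card_le_card_of_injOn (fun y => (y : ℕ) / 2) (fun y _ => ?_) fun y hy z hz hyz => ?_
        · simp only [coe_range, Set.mem_Iio]
          omega
        · by_contra hne
          refine hs hy hz hne (pathGraph_adj.mpr ?_)
          rw [Fin.ext_iff] at hne
          simp only at hyz
          omega
    _ = (n + 1) / 2 := card_range _

open Classical in
theorem le_card_filter_exists_pathArc : n / 2 ≤ #{v | ∃ w, pathArc n o v w} := by
  let f : Fin (n / 2) → Fin n := fun i =>
    if o (2 * i) then ⟨2 * i, by omega⟩ else ⟨2 * i + 1, by omega⟩
  have hf : ∀ i, (f i : ℕ) / 2 = i := fun i => by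
    simp only [f]
    split <;> simp only <;> omega
  calc n / 2 = #(univ : Finset (Fin (n / 2))) := by simp
    _ ≤ #{v | ∃ w, pathArc n o v w} := by
        refine card_le_card_of_injOn f (fun i _ => ?_)
          fun i _ j _ hij => Fin.ext (by rw [← hf i, ← hf j, hij])
        refine mem_filter.mpr ⟨mem_univ _, ?_⟩
        simp only [f]
        split_ifs with ho
        · exact ⟨⟨2 * i + 1, by omega⟩, Or.inl ⟨rfl, ho⟩⟩
        · exact ⟨⟨2 * i, by omega⟩, Or.inr ⟨rfl, by simpa using ho⟩⟩

variable {α : Type*} {c : Fin n → α} {a : α}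

theorem card_dominators_le_two (hs : ∀ u ∈ s, Dominates (pathArc n o) c u a) : #s ≤ 2 := by
  rcases s.eq_empty_or_nonempty with rfl | ⟨u, hu⟩
  · simp
  obtain ⟨x, hx⟩ := (hs u hu).1
  exact card_le_two_of_forall_adj fun w hw => ((hs w hw).2 x hx).adj.symm

variable [DecidableEq α]

theorem IsDominatorColoring.isIndepSet_colorClass (hc : IsDominatorColoring (pathArc n o) c)
    (a : α) : (pathGraph n).IsIndepSet (({y | c y = a} : Finset (Fin n)) : Set (Fin n)) := by
  intro y hy z hz _ hadj
  have hyz : c y = c z := (mem_filter.mp hy).2.trans (mem_filter.mp hz).2.symm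
  rcases pathArc_or_pathArc_of_adj (o := o) hadj with h | h
  · exact hc.1 y z h hyz
  · exact hc.1 z y h hyz.symm

theorem Dominates.card_colorClass_le_two (h : Dominates (pathArc n o) c v a) :
    #{y | c y = a} ≤ 2 :=
  card_le_two_of_forall_adj fun y hy => (h.2 y (mem_filter.mp hy).2).adj

theorem card_colorClass_add_card_dominators_le_three (hne : s.Nonempty)
    (hs : ∀ u ∈ s, Dominates (pathArc n o) c u a) : #{y | c y = a} + #s ≤ 3 := by
  have hs2 := card_dominators_le_two hs
  rcases le_or_gt #s 1 with h1 | h1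
  · obtain ⟨u, hu⟩ := hne
    have := (hs u hu).card_colorClass_le_two
    omega
  · obtain ⟨u, hu, w, hw, huw⟩ := one_lt_card.mp h1
    have : #{y | c y = a} ≤ 1 := card_le_one_of_forall_adj_adj huw fun y hy =>
      ⟨((hs u hu).2 y (mem_filter.mp hy).2).adj, ((hs w hw).2 y (mem_filter.mp hy).2).adj⟩
    omega

end Path

theorem sum_ite_const_eq {ι : Type*} [Fintype ι] (p : ι → Prop) [DecidablePred p] (x y : ℕ) :
    ∑ i, (if p i then x else y) = x * #{i | p i} + y * (Fintype.card ι - #{i | p i}) := by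
  rw [sum_ite, sum_const, sum_const, smul_eq_mul, smul_eq_mul, mul_comm, mul_comm _ y,
    ← card_univ, ← card_filter_add_card_filter_not (s := univ) p, Nat.add_sub_cancel_left]

theorem add_three_le_of_isDominatorColoring_pathArc {k m : ℕ} (hk : 2 ≤ k) {o : ℕ → Bool}
    {c : Fin (4 * k + 2) → Fin m} (hc : IsDominatorColoring (pathArc (4 * k + 2) o) c) :
    k + 3 ≤ m := by
  classical
  set D : Finset (Fin (4 * k + 2)) := {v | ∃ w, pathArc _ o v w}
  set F : Fin m → Finset (Fin (4 * k + 2)) := fun a => {v | Dominates (pathArc _ o) c v a}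
  have hF : ∀ a, ∀ v ∈ F a, Dominates _ c v a := fun a v hv => (mem_filter.mp hv).2
  set H : Finset (Fin m) := {a | (F a).Nonempty}
  have hD : 2 * k + 1 ≤ #D := le_card_filter_exists_pathArc.trans' (by omega)
  have hV : 4 * k + 2 = ∑ a, #{y | c y = a} := by
    simpa using card_eq_sum_card_fiberwise (s := univ) (t := univ) (f := c) fun _ _ => mem_univ _
  have hDF : #D ≤ ∑ a, #(F a) := by
    refine (card_le_card fun v hv => ?_).trans card_biUnion_le
    obtain ⟨a, ha⟩ := hc.2 v (mem_filter.mp hv).2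
    exact mem_biUnion.mpr ⟨a, mem_univ _, mem_filter.mpr ⟨mem_univ _, ha⟩⟩
  have hcount : 4 * k + 2 + #D ≤ 3 * #H + (2 * k + 1) * (m - #H) := by
    calc 4 * k + 2 + #D ≤ ∑ a, (#{y | c y = a} + #(F a)) := by rw [sum_add_distrib, ← hV]; omega
      _ ≤ ∑ a, if (F a).Nonempty then 3 else 2 * k + 1 := sum_le_sum fun a _ => by
          split_ifs with ha
          · exact card_colorClass_add_card_dominators_le_three ha (hF a)
          · rw [not_nonempty_iff_eq_empty.mp ha, card_empty, add_zero]
            exact (card_le_of_isIndepSet_pathGraph (hc.isIndepSet_colorClass a)).trans_eq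
              (by omega)
      _ = 3 * #H + (2 * k + 1) * (m - #H) := by rw [sum_ite_const_eq, Fintype.card_fin]
  have hdom : #D ≤ 2 * #H := by
    calc #D ≤ ∑ a, #(F a) := hDF
      _ ≤ ∑ a, if (F a).Nonempty then 2 else 0 := sum_le_sum fun a _ => by
          split_ifs with ha
          · exact card_dominators_le_two (hF a)
          · simp [not_nonempty_iff_eq_empty.mp ha]
      _ = 2 * #H := by rw [sum_ite_const_eq, zero_mul, add_zero]
  have hH : #H ≤ m := (card_le_univ H).trans_eq (Fintype.card_fin m)
  by_contra! hm
  -- `hD` and `hdom` give `#H ≥ k + 1`, so at most one colour is dominated by nobody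
  obtain hj | hj : m - #H = 0 ∨ m - #H = 1 := by omega
  all_goals rw [hj] at hcount; omega

def alternatingOrientation (i : ℕ) : Bool := decide (i % 2 = 0)

def alternatingColor (x : ℕ) : ℕ :=
  if x % 2 = 0 then 0 else if x % 4 = 3 then 1 else x / 4 + 2

def alternatingColoring (k : ℕ) (v : Fin (4 * k + 2)) : Fin (k + 3) :=
  ⟨alternatingColor v, by unfold alternatingColor; split_ifs <;> omega⟩

theorem pathArc_alternatingOrientation_iff {n : ℕ} {u v : Fin n} :
    pathArc n alternatingOrientation u v ↔
      (u : ℕ) % 2 = 0 ∧ ((u : ℕ) + 1 = v ∨ (v : ℕ) + 1 = u) := by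
  simp only [pathArc, alternatingOrientation, decide_eq_true_eq, decide_eq_false_iff_not]
  omega

theorem alternatingColor_eq_add_two_iff {x a : ℕ} : alternatingColor x = a + 2 ↔ x = 4 * a + 1 := by
  unfold alternatingColor
  grind

theorem isDominatorColoring_alternatingColoring (k : ℕ) :
    IsDominatorColoring (pathArc (4 * k + 2) alternatingOrientation) (alternatingColoring k) := by
  refine ⟨fun u v huv heq => ?_, fun v ⟨w, hw⟩ => ?_⟩
  · rw [pathArc_alternatingOrientation_iff] at huv
    have := congrArg Fin.val heq
    simp only [alternatingColoring, alternatingColor] at this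
    split_ifs at this <;> omega
  · have hv := (pathArc_alternatingOrientation_iff.mp hw).1
    refine ⟨⟨v / 4 + 2, by omega⟩, ⟨⟨4 * (v / 4) + 1, by omega⟩, ?_⟩, fun y hy => ?_⟩
    · exact Fin.ext (alternatingColor_eq_add_two_iff.mpr rfl)
    · have hy := alternatingColor_eq_add_two_iff.mp (congrArg Fin.val hy)
      rw [pathArc_alternatingOrientation_iff]
      omega

theorem min_domChrom_orientations_of_path_four_k_add_two (k : ℕ) (hk : 2 ≤ k) :
    minDomChromPath (4 * k + 2) = k + 3 := by
  have hlower : ∀ o, k + 3 ≤ domChrom (pathArc (4 * k + 2) o) := fun o =>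
    le_domChrom (exists_isDominatorColoring pathArc_irrefl) fun _ _ hc =>
      add_three_le_of_isDominatorColoring_pathArc hk hc
  have hattained : domChrom (pathArc (4 * k + 2) alternatingOrientation) = k + 3 :=
    (domChrom_le (isDominatorColoring_alternatingColoring k)).antisymm (hlower _)
  have hmem : k + 3 ∈ {m | ∃ o, m = domChrom (pathArc (4 * k + 2) o)} :=
    ⟨_, hattained.symm⟩
  refine (Nat.sInf_le hmem).antisymm (le_csInf ⟨_, hmem⟩ ?_)
  rintro _ ⟨o, rfl⟩
  exact hlower o
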